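/- Let M ⊆ ℕ be infinite and let f be a discrete double sequence in βω indexed by pairs from M. Let p and q be distinct free ultrafilters on ℕ with M ∈ p and M ∈ q. If x is a p²-limit of f (i.e., {(n,m) : n < m, n, m ∈ M, f(n,m) ∈ U} ∈ p⊗p for every open neighborhood U of x) and y is a q²-limit of f, then x ≠ y. -/
import Mathlib


/-- An ultrafilter on ℕ is free (nonprincipal) if it contains no finite set. -/
def IsFree (p : Ultrafilter ℕ) : Prop := ∀ A : Set ℕ, A.Finite → A ∉ p

/-- The Fubini product `p ⊗ q` of ultrafilters on ℕ:
`A ∈ p ⊗ q ↔ {n | {m | (n, m) ∈ A} ∈ q} ∈ p`. -/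
def fubini (p q : Ultrafilter ℕ) : Ultrafilter (ℕ × ℕ) :=
  p.bind fun n => q.map fun m => (n, m)

/-- A subset `D` of a topological space is discrete if every point of `D` has an open
neighborhood meeting `D` only in that point. -/
def IsDiscreteSubset {Y : Type*} [TopologicalSpace Y] (D : Set Y) : Prop :=
  ∀ d ∈ D, ∃ U : Set Y, IsOpen U ∧ U ∩ D = {d}

/-- A double sequence `f` in βω indexed by pairs from `M` is discrete if it is injective
(on pairs from `M`) and its range is a discrete subset of βω. -/
def IsDiscreteDoubleSeqOn (M : Set ℕ) (f : ℕ → ℕ → Ultrafilter ℕ) : Prop :=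
  (∀ n ∈ M, ∀ m ∈ M, ∀ n' ∈ M, ∀ m' ∈ M,
    n < m → n' < m' → f n m = f n' m' → n = n' ∧ m = m') ∧
  IsDiscreteSubset {y : Ultrafilter ℕ | ∃ n ∈ M, ∃ m ∈ M, n < m ∧ y = f n m}

lemma mem_fubini (p q : Ultrafilter ℕ) (s : Set (ℕ × ℕ)) :
    s ∈ fubini p q ↔ {n | {m | (n, m) ∈ s} ∈ q} ∈ p := by
  have hco : (↑(fubini p q) : Filter (ℕ × ℕ)) =
      Filter.bind (↑p) (fun n : ℕ =>
        ((Ultrafilter.map (fun m : ℕ => (n, m)) q : Ultrafilter (ℕ × ℕ)) : Filter (ℕ × ℕ))) := rfl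
  rw [← Ultrafilter.mem_coe, hco, Filter.mem_bind']
  rfl

/-- Distinct free ultrafilters give distinct `p²`-limits of a discrete double sequence. -/
theorem p2_limits_distinct (M : Set ℕ) (hM : M.Infinite) (f : ℕ → ℕ → Ultrafilter ℕ)
    (hf : IsDiscreteDoubleSeqOn M f) (p q : Ultrafilter ℕ) (hp : IsFree p) (hq : IsFree q)
    (hpq : p ≠ q) (hMp : M ∈ p) (hMq : M ∈ q) (x y : Ultrafilter ℕ)
    (hx : ∀ U : Set (Ultrafilter ℕ), IsOpen U → x ∈ U →
      {z : ℕ × ℕ | z.1 ∈ M ∧ z.2 ∈ M ∧ z.1 < z.2 ∧ f z.1 z.2 ∈ U} ∈ fubini p p)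
    (hy : ∀ U : Set (Ultrafilter ℕ), IsOpen U → y ∈ U →
      {z : ℕ × ℕ | z.1 ∈ M ∧ z.2 ∈ M ∧ z.1 < z.2 ∧ f z.1 z.2 ∈ U} ∈ fubini q q) :
    x ≠ y := by
  obtain ⟨hinj, hdisc⟩ := hf
  set I : Set (ℕ × ℕ) := {z | z.1 ∈ M ∧ z.2 ∈ M ∧ z.1 < z.2} with hIdef
  -- choose isolating basic sets
  have hS0 : ∀ z, ∃ S : Set ℕ, z ∈ I →
      (S ∈ f z.1 z.2 ∧ ∀ w ∈ I, S ∈ f w.1 w.2 → w = z) := by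
    intro z
    by_cases hz : z ∈ I
    · have hdz : f z.1 z.2 ∈ {y : Ultrafilter ℕ | ∃ n ∈ M, ∃ m ∈ M, n < m ∧ y = f n m} :=
        ⟨z.1, hz.1, z.2, hz.2.1, hz.2.2, rfl⟩
      obtain ⟨U, hUopen, hUD⟩ := hdisc _ hdz
      have hmemU : f z.1 z.2 ∈ U := by
        have : f z.1 z.2 ∈ ({f z.1 z.2} : Set (Ultrafilter ℕ)) := rfl
        rw [← hUD] at this
        exact this.1
      obtain ⟨V, hVb, hVmem, hVU⟩ :=
        ultrafilterBasis_is_basis.exists_subset_of_mem_open hmemU hUopen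
      obtain ⟨S, rfl⟩ := hVb
      refine ⟨S, fun _ => ⟨hVmem, ?_⟩⟩
      intro w hw hSw
      have hw' : f w.1 w.2 ∈ U ∩ {y : Ultrafilter ℕ | ∃ n ∈ M, ∃ m ∈ M, n < m ∧ y = f n m} :=
        ⟨hVU hSw, ⟨w.1, hw.1, w.2, hw.2.1, hw.2.2, rfl⟩⟩
      rw [hUD] at hw'
      have heq : f w.1 w.2 = f z.1 z.2 := hw'
      have := hinj w.1 hw.1 w.2 hw.2.1 z.1 hz.1 z.2 hz.2.1 hw.2.2 hz.2.2 heq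
      exact Prod.ext this.1 this.2
    · exact ⟨∅, fun h => absurd h hz⟩
  choose S hS using hS0
  -- the pairing function, used to disjointify
  set k : ℕ × ℕ → ℕ := fun z => Nat.pair z.1 z.2 with hkdef
  have hkinj : Function.Injective k := by
    intro a b hab
    have := Nat.pair_eq_pair.1 hab
    exact Prod.ext this.1 this.2
  -- finiteness of predecessors
  have hFfin : ∀ z : ℕ × ℕ, ({w | w ∈ I ∧ k w < k z} : Set (ℕ × ℕ)).Finite := by
    intro z
    have : ({w | w ∈ I ∧ k w < k z} : Set (ℕ × ℕ)) ⊆ k ⁻¹' (Set.Iio (k z)) :=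
      fun w hw => hw.2
    exact Set.Finite.subset ((Set.finite_Iio (k z)).preimage hkinj.injOn) this
  -- disjointified sets
  set T : ℕ × ℕ → Set ℕ := fun z => S z \ ⋃ w ∈ {w | w ∈ I ∧ k w < k z}, S w with hTdef
  have hSnot : ∀ z ∈ I, ∀ w ∈ I, w ≠ z → S w ∉ f z.1 z.2 := by
    intro z hz w hw hwz hmem
    exact hwz ((hS w hw).2 z hz hmem).symm
  have hT1 : ∀ z ∈ I, T z ∈ f z.1 z.2 := by
    intro z hz
    have h1 : S z ∈ f z.1 z.2 := (hS z hz).1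
    have h2 : (⋃ w ∈ {w | w ∈ I ∧ k w < k z}, S w)ᶜ ∈ f z.1 z.2 := by
      rw [Set.compl_iUnion₂]
      refine (Filter.biInter_mem (hFfin z)).2 ?_
      intro w hw
      refine Ultrafilter.compl_mem_iff_notMem.2 ?_
      exact hSnot z hz w hw.1 (fun h => lt_irrefl _ (h ▸ hw.2))
    exact Filter.inter_mem h1 h2
  have hTdisj : ∀ z ∈ I, ∀ w ∈ I, z ≠ w → T z ∩ T w = ∅ := by
    have key : ∀ z ∈ I, ∀ w ∈ I, k w < k z → T z ∩ T w = ∅ := by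
      intro z hz w hw hlt
      apply Set.eq_empty_iff_forall_notMem.2
      rintro a ⟨⟨_, haz⟩, ⟨haw, _⟩⟩
      exact haz (Set.mem_biUnion ⟨hw, hlt⟩ haw)
    intro z hz w hw hzw
    rcases lt_or_gt_of_ne (fun h : k z = k w => hzw (hkinj h)) with h | h
    · rw [Set.inter_comm]; exact key w hw z hz h
    · exact key z hz w hw h
  -- a set separating p from q
  have hA : ∃ A : Set ℕ, A ∈ p ∧ A ∉ q := by
    by_contra h
    push_neg at h
    apply hpq
    apply Ultrafilter.coe_injective
    apply Filter.ext
    intro s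
    constructor
    · exact h s
    · intro hsq
      by_contra hsp
      have : sᶜ ∈ q := h sᶜ (Ultrafilter.compl_mem_iff_notMem.2 hsp)
      have := Filter.inter_mem hsq this
      simpa using Ultrafilter.nonempty_of_mem this
  obtain ⟨A, hAp, hAnq⟩ := hA
  have hAcq : Aᶜ ∈ q := Ultrafilter.compl_mem_iff_notMem.2 hAnq
  -- the separating sets
  set W : Set ℕ := ⋃ z ∈ {z | z ∈ I ∧ z.1 ∈ A}, T z with hWdef
  set W' : Set ℕ := ⋃ z ∈ {z | z ∈ I ∧ z.1 ∉ A}, T z with hW'def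
  have hWW' : W ∩ W' = ∅ := by
    apply Set.eq_empty_iff_forall_notMem.2
    rintro a ⟨haW, haW'⟩
    obtain ⟨z, hz, haz⟩ := Set.mem_iUnion₂.1 haW
    obtain ⟨w, hw, haw⟩ := Set.mem_iUnion₂.1 haW'
    have hzw : z ≠ w := fun h => hw.2 (h ▸ hz.2)
    have := hTdisj z hz.1 w hw.1 hzw
    exact Set.eq_empty_iff_forall_notMem.1 this a ⟨haz, haw⟩
  -- generic limit step
  have main : ∀ (r : Ultrafilter ℕ) (u : Ultrafilter ℕ) (B : Set ℕ), B ∈ r →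
      (∀ U : Set (Ultrafilter ℕ), IsOpen U → u ∈ U →
        {z : ℕ × ℕ | z.1 ∈ M ∧ z.2 ∈ M ∧ z.1 < z.2 ∧ f z.1 z.2 ∈ U} ∈ fubini r r) →
      (⋃ z ∈ {z | z ∈ I ∧ z.1 ∈ B}, T z) ∈ u := by
    intro r u B hB hu
    set V : Set ℕ := ⋃ z ∈ {z | z ∈ I ∧ z.1 ∈ B}, T z with hVdef
    by_contra hVu
    have hVc : Vᶜ ∈ u := Ultrafilter.compl_mem_iff_notMem.2 hVu
    have h1 := hu {v | Vᶜ ∈ v} (ultrafilter_isOpen_basic _) hVc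
    have h2 : {z : ℕ × ℕ | z.1 ∈ B} ∈ fubini r r := by
      rw [mem_fubini]
      apply Filter.mem_of_superset hB
      intro n hn
      exact Filter.mem_of_superset Filter.univ_mem fun m _ => hn
    obtain ⟨z, hz1, hz2⟩ := Ultrafilter.nonempty_of_mem (Filter.inter_mem h1 h2)
    have hzI : z ∈ I := ⟨hz1.1, hz1.2.1, hz1.2.2.1⟩
    have hTz : T z ∈ f z.1 z.2 := hT1 z hzI
    have hTsub : T z ⊆ V := Set.subset_biUnion_of_mem (⟨hzI, hz2⟩ : z ∈ {z | z ∈ I ∧ z.1 ∈ B})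
    have : T z ∩ Vᶜ ∈ f z.1 z.2 := Filter.inter_mem hTz hz1.2.2.2
    obtain ⟨a, haT, haVc⟩ := Ultrafilter.nonempty_of_mem this
    exact haVc (hTsub haT)
  have hWx : W ∈ x := main p x A hAp hx
  have hW'y : W' ∈ y := main q y Aᶜ hAcq hy
  intro hxy
  rw [hxy] at hWx
  have := Filter.inter_mem hWx hW'y
  rw [hWW'] at this
  simpa using Ultrafilter.nonempty_of_mem this
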